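/- Let α be a silhouette curve on a surface M in Galilean 3-space (⟨n,d⟩=0 along α) whose axis d is a unit isotropic vector parallel to Q, i.e. d=±Q. Then τ_g=0 and k_g=0 along α, and consequently τ=0, so α is a plane curve. -/

import Mathlib

/-! Since `d = ±Q` is constant, `Q' = τ_g n = 0` with `n` a unit vector, so `τ_g = 0`.
Differentiating `⟨T, d⟩ = 0` gives `k_g ⟨Q, d⟩ + k_n ⟨n, d⟩ = 0`; the silhouette condition kills
the second term and `⟨Q, d⟩ = ±1`, so `k_g = 0`. Both terms of the torsion formula then vanish. -/

/-- The scalar product of (projections of) vectors onto the `yz`-plane; it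
agrees with the Galilean scalar product on isotropic vectors. -/
def iprod (x y : ℝ × ℝ × ℝ) : ℝ := x.2.1 * y.2.1 + x.2.2 * y.2.2

theorem iprod_add_left (x y z : ℝ × ℝ × ℝ) : iprod (x + y) z = iprod x z + iprod y z := by
  simp only [iprod, Prod.snd_add, Prod.fst_add]
  ring

theorem iprod_smul_left (c : ℝ) (x y : ℝ × ℝ × ℝ) : iprod (c • x) y = c * iprod x y := by
  simp only [iprod, Prod.smul_snd, Prod.smul_fst, smul_eq_mul]
  ring

theorem iprod_neg_right (x y : ℝ × ℝ × ℝ) : iprod x (-y) = -iprod x y := by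
  simp only [iprod, Prod.snd_neg, Prod.fst_neg]
  ring

theorem iprod_zero_left (y : ℝ × ℝ × ℝ) : iprod 0 y = 0 := by
  simp [iprod]

theorem eq_zero_of_smul_eq_zero_of_iprod_self_eq_one {c : ℝ} {x : ℝ × ℝ × ℝ}
    (hx : iprod x x = 1) (hc : c • x = 0) : c = 0 := by
  have h := iprod_smul_left c x x
  rwa [hc, iprod_zero_left, hx, mul_one, eq_comm] at h

theorem HasDerivAt.iprod_const {T : ℝ → ℝ × ℝ × ℝ} {T' : ℝ × ℝ × ℝ} {s : ℝ}
    (hT : HasDerivAt T T' s) (d : ℝ × ℝ × ℝ) :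
    HasDerivAt (fun t => iprod (T t) d) (iprod T' d) s := by
  have hy : HasDerivAt (fun t => (T t).2.1) T'.2.1 s := hT.snd.fst
  have hz : HasDerivAt (fun t => (T t).2.2) T'.2.2 s := hT.snd.snd
  exact (hy.mul_const d.2.1).add (hz.mul_const d.2.2)

theorem iprod_deriv_eq_zero_of_iprod_eq_const {T : ℝ → ℝ × ℝ × ℝ} {d : ℝ × ℝ × ℝ} {c s : ℝ}
    (hT : DifferentiableAt ℝ T s) (h : ∀ t, iprod (T t) d = c) : iprod (deriv T s) d = 0 := by
  have hderiv := hT.hasDerivAt.iprod_const d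
  rw [show (fun t => iprod (T t) d) = fun _ => c from funext h] at hderiv
  exact hderiv.unique (hasDerivAt_const s c)

theorem silhouette_axis_parallel_Q_plane_curve_general
    (τ kg kn τg : ℝ → ℝ) (T Q n : ℝ → ℝ × ℝ × ℝ) (d : ℝ × ℝ × ℝ)
    (hTdiff : Differentiable ℝ T)
    (hDarboux : ∀ s, deriv T s = kg s • Q s + kn s • n s ∧ deriv Q s = τg s • n s
        ∧ deriv n s = (-(τg s)) • Q s)
    (hQunit : ∀ s, iprod (Q s) (Q s) = 1)
    (hnunit : ∀ s, iprod (n s) (n s) = 1)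
    (hd : (∀ s, d = Q s) ∨ (∀ s, d = -(Q s)))
    (hsil : ∀ s, iprod (n s) d = 0)
    (hTd : ∀ s, iprod (T s) d = 0)
    (hτ : ∀ s, τ s = -(τg s) + (deriv kg s * kn s - kg s * deriv kn s)
        / ((kg s) ^ 2 + (kn s) ^ 2)) :
    ∀ s, τg s = 0 ∧ kg s = 0 ∧ τ s = 0 := by
  have hQ' : ∀ s, deriv Q s = 0 := by
    rcases hd with h | h
    · simp [show Q = fun _ => d from funext fun s => (h s).symm]
    · simp [show Q = fun _ => -d from funext fun s => by rw [h s, neg_neg]]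
  have hτg : ∀ s, τg s = 0 := fun s =>
    eq_zero_of_smul_eq_zero_of_iprod_self_eq_one (hnunit s) ((hDarboux s).2.1 ▸ hQ' s)
  have hQd : ∀ s, iprod (Q s) d ≠ 0 := by
    intro s
    rcases hd with h | h <;> simp [h s, iprod_neg_right, hQunit s]
  have hkg : ∀ s, kg s = 0 := by
    intro s
    have hT' := iprod_deriv_eq_zero_of_iprod_eq_const (hTdiff s) hTd
    rw [(hDarboux s).1, iprod_add_left, iprod_smul_left, iprod_smul_left, hsil s, mul_zero,
      add_zero] at hT'
    exact (mul_eq_zero.mp hT').resolve_right (hQd s)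
  intro s
  have hkg' : deriv kg s = 0 := by simp [show kg = fun _ => 0 from funext hkg]
  exact ⟨hτg s, hkg s, by simp [hτ s, hτg s, hkg s, hkg']⟩

/-- If `α` is a silhouette curve (`⟨n,d⟩ = 0`) on a surface in Galilean
3-space whose fixed unit isotropic axis `d` is parallel to `Q` (`d = ±Q`),
then `τ_g = 0`, `k_g = 0`, and consequently `τ = 0`: `α` is a plane curve. -/
theorem silhouette_axis_parallel_Q_plane_curve
    (τ kg kn τg : ℝ → ℝ) (T Q n : ℝ → ℝ × ℝ × ℝ) (d : ℝ × ℝ × ℝ)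
    (hTdiff : Differentiable ℝ T) (hQdiff : Differentiable ℝ Q)
    (hndiff : Differentiable ℝ n)
    (hDarboux : ∀ s, deriv T s = kg s • Q s + kn s • n s ∧ deriv Q s = τg s • n s
        ∧ deriv n s = (-(τg s)) • Q s)
    (hQunit : ∀ s, iprod (Q s) (Q s) = 1)
    (hnunit : ∀ s, iprod (n s) (n s) = 1)
    (hd : (∀ s, d = Q s) ∨ (∀ s, d = -(Q s)))
    (hsil : ∀ s, iprod (n s) d = 0)
    (hTd : ∀ s, iprod (T s) d = 0)
    (hτ : ∀ s, τ s = -(τg s) + (deriv kg s * kn s - kg s * deriv kn s)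
        / ((kg s) ^ 2 + (kn s) ^ 2)) :
    ∀ s, τg s = 0 ∧ kg s = 0 ∧ τ s = 0 :=
  silhouette_axis_parallel_Q_plane_curve_general τ kg kn τg T Q n d hTdiff hDarboux hQunit hnunit hd
    hsil hTd hτ
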